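/- Let f be a homeomorphism of a compact metric space K. If there exists a strictly positive nonatomic Borel probability measure μ (i.e., supp(μ) = K) compatible with inverse shadowing for f, then f has the inverse shadowing property: for every ε > 0 there exists d > 0 such that for every point p ∈ K and every d-method g for f there exists a trajectory {x_k}_{k∈ℤ} of g with dist(x_k, f^k(p)) ≤ ε for all k ∈ ℤ. -/

import Mathlib

/-
A `d`-method with continuous maps has a closed set of trajectories in the compact space
`ℤ → K`, and `ε`-tracing is a closed condition on (trajectory, point); projecting along the
compact factor shows that `Φ(ε,d,f)` is closed. Compatibility with inverse shadowing makes
`Φ(ε,d,f)` meet every set of positive measure, hence, by strict positivity, every nonempty open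
set. A dense closed set is everything.
-/

open MeasureTheory Filter Topology

/-- `Φ(ε,d,f)`: the set of points `p` such that for every `d`-method `g = {g_k}_{k∈ℤ}` for the
homeomorphism `f` there exists a full trajectory of `g` that `ε`-traces the `f`-orbit of `p`.
(Here `f.toEquiv ^ k` is the `k`-th iterate of `f`, `k ∈ ℤ`.) -/
def Phi {K : Type*} [MetricSpace K] (f : K ≃ₜ K) (ε d : ℝ) : Set K :=
  {p | ∀ g : ℤ → K → K, (∀ k, Continuous (g k)) → (∀ k z, dist (g k z) (f z) ≤ d) →
    ∃ x : ℤ → K, (∀ k, x (k + 1) = g k (x k)) ∧ ∀ k : ℤ, dist (x k) ((f.toEquiv ^ k) p) ≤ ε}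

open Set

namespace Homeomorph

variable {X : Type*} [TopologicalSpace X]

def toPerm : (X ≃ₜ X) →* Equiv.Perm X where
  toFun h := h.toEquiv
  map_one' := rfl
  map_mul' _ _ := rfl

theorem continuous_toEquiv_zpow (f : X ≃ₜ X) (k : ℤ) : Continuous ⇑(f.toEquiv ^ k) := by
  rw [show f.toEquiv ^ k = (f ^ k).toEquiv from (map_zpow toPerm f k).symm]
  exact (f ^ k).continuous

end Homeomorph

section

variable {K : Type*} [MetricSpace K] [CompactSpace K]

theorem isClosed_setOf_exists_trajectory_dist_le (f : K ≃ₜ K) (g : ℤ → K → K)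
    (hg : ∀ k, Continuous (g k)) (ε : ℝ) :
    IsClosed {p | ∃ x : ℤ → K, (∀ k, x (k + 1) = g k (x k)) ∧
      ∀ k : ℤ, dist (x k) ((f.toEquiv ^ k) p) ≤ ε} := by
  have hclosed : IsClosed {xp : (ℤ → K) × K | (∀ k, xp.1 (k + 1) = g k (xp.1 k)) ∧
      ∀ k : ℤ, dist (xp.1 k) ((f.toEquiv ^ k) xp.2) ≤ ε} := by
    simp only [ofPred_and, ofPred_forall]
    refine (isClosed_iInter fun k => isClosed_eq ?_ ?_).inter
      (isClosed_iInter fun k => isClosed_le ?_ continuous_const)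
    · exact (continuous_apply (k + 1)).comp continuous_fst
    · exact (hg k).comp ((continuous_apply k).comp continuous_fst)
    · exact ((continuous_apply k).comp continuous_fst).dist
        ((f.continuous_toEquiv_zpow k).comp continuous_snd)
  simpa [Set.image] using isClosedMap_snd_of_compactSpace _ hclosed

theorem isClosed_phi (f : K ≃ₜ K) (ε d : ℝ) : IsClosed (Phi f ε d) := by
  simp only [Phi, ofPred_forall]
  exact isClosed_iInter fun g => isClosed_iInter fun hg => isClosed_iInter fun _ =>
    isClosed_setOf_exists_trajectory_dist_le f g hg ε

end

theorem stmt15 {K : Type*} [MetricSpace K] [CompactSpace K] [MeasurableSpace K]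
    (f : K ≃ₜ K) (μ : Measure K)
    (hpos : ∀ U : Set K, IsOpen U → U.Nonempty → 0 < μ U)
    (hcompat : ∀ ε > (0 : ℝ), ∃ d > (0 : ℝ), ∀ A : Set K, 0 < μ A →
      (A ∩ Phi f ε d).Nonempty) :
    ∀ ε > (0 : ℝ), ∃ d > (0 : ℝ), ∀ p : K, ∀ g : ℤ → K → K,
      (∀ k, Continuous (g k)) → (∀ k z, dist (g k z) (f z) ≤ d) →
      ∃ x : ℤ → K, (∀ k, x (k + 1) = g k (x k)) ∧ ∀ k : ℤ, dist (x k) ((f.toEquiv ^ k) p) ≤ ε := by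
  intro ε hε
  obtain ⟨d, hd, hΦ⟩ := hcompat ε hε
  have hdense : Dense (Phi f ε d) :=
    dense_iff_inter_open.2 fun U hU hne => hΦ U (hpos U hU hne)
  have huniv : Phi f ε d = univ := by
    rw [← (isClosed_phi f ε d).closure_eq, hdense.closure_eq]
  exact ⟨d, hd, eq_univ_iff_forall.1 huniv⟩
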